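/- Let B be a finite set of Boolean functions such that V ⊆ [B] ⊆ M (respectively E ⊆ [B] ⊆ M), where V is the clone generated by {∨, 0, 1}, E is the clone generated by {∧, 0, 1}, and M is the clone of all monotone Boolean functions. Then there exists a propositional B-formula f(x,y) such that f represents x ∨ y (respectively x ∧ y) and each of the variables x and y occurs exactly once in f(x,y). -/

import Mathlib

/-!
By duality (`f ↦ ¬ f(¬ x₁, …, ¬ xₙ)`, which preserves monotonicity and swaps `∨` with `∧`)
it suffices to treat `x ∨ y`. Let `p = f(p₁, …, pₙ)` be a `B`-formula for `x ∨ y`, and let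
`u, a, b` be the vectors of values of the `pᵢ` at `(0,0)`, `(1,0)`, `(0,1)`. Climbing one
coordinate at a time from `u` towards `a`, and then from the vector reached towards its join
with `b`, gives a vector `m` with `f m = 0` and coordinates `k, k'` with `uₖ = 0`, `aₖ = 1`,
`bₖ' = 1` such that raising `m` at `k` or at `k'` makes `f` equal to `1`. If `k ≠ k'`, plugging
`x` at `k`, `y` at `k'` and constants elsewhere gives a read-once formula for `x ∨ y`. If
`k = k'`, then `pₖ` itself takes the values of `x ∨ y` at the three points, and a read-once
replacement for it is found by induction.
-/

/-- A Boolean function of some arity `n` (arity 0 gives the constant functions). -/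
abbrev BFun : Type := Σ n : ℕ, (Fin n → Bool) → Bool

/-- A clone: a set of Boolean functions containing all projections and closed
under composition (superposition). -/
def IsClone (C : Set BFun) : Prop :=
  (∀ (n : ℕ) (k : Fin n), (⟨n, fun b => b k⟩ : BFun) ∈ C) ∧
  (∀ f ∈ C, ∀ (m : ℕ) (g : Fin (Sigma.fst f) → ((Fin m → Bool) → Bool)),
    (∀ k, (⟨m, g k⟩ : BFun) ∈ C) →
    (⟨m, fun b => f.2 fun k => g k b⟩ : BFun) ∈ C)

/-- `cloneGen B` = `[B]`, the smallest clone containing `B`. -/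
def cloneGen (B : Set BFun) : Set BFun := ⋂₀ {C | IsClone C ∧ B ⊆ C}

/-- Propositional formulas over variables `V` with arbitrary Boolean connectives. -/
inductive PForm (V : Type) : Type
  | var : V → PForm V
  | app : (n : ℕ) → ((Fin n → Bool) → Bool) → (Fin n → PForm V) → PForm V

/-- Evaluation under an assignment `σ`: the Boolean function represented by the formula. -/
def PForm.eval {V : Type} (σ : V → Bool) : PForm V → Bool
  | PForm.var x => σ x
  | PForm.app _ f args => f fun k => PForm.eval σ (args k)

/-- All connectives occurring in the formula come from `B` (a `B`-formula). -/
def PForm.usesFuns {V : Type} (B : Set BFun) : PForm V → Prop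
  | PForm.var _ => True
  | PForm.app n f args => (⟨n, f⟩ : BFun) ∈ B ∧ ∀ k, PForm.usesFuns B (args k)

/-- Number of (syntactic) occurrences of the variable `x` in the formula. -/
def PForm.occ {V : Type} [DecidableEq V] (x : V) : PForm V → ℕ
  | PForm.var y => if y = x then 1 else 0
  | PForm.app _ _ args => ∑ k, PForm.occ x (args k)

/-- The unary Boolean negation function. -/
def notFun : BFun := ⟨1, fun b => ! b 0⟩

/-- The 0-ary constant Boolean function with value `c`. -/
def constFun (c : Bool) : BFun := ⟨0, fun _ => c⟩

/-- The binary Boolean OR function. -/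
def orFun : BFun := ⟨2, fun b => b 0 || b 1⟩

/-- The binary Boolean AND function. -/
def andFun : BFun := ⟨2, fun b => b 0 && b 1⟩

/-- The clone M of all monotone Boolean functions. -/
def monotoneFuns : Set BFun :=
  {f : BFun | ∀ a b : Fin f.1 → Bool, (∀ k, a k ≤ b k) → f.2 a ≤ f.2 b}

open Function

namespace PForm

variable {V W : Type}

def subst (s : V → PForm W) : PForm V → PForm W
  | var v => s v
  | app n f args => app n f fun k => (args k).subst s

theorem eval_subst (s : V → PForm W) (σ : W → Bool) :
    ∀ p : PForm V, (p.subst s).eval σ = p.eval fun v => (s v).eval σ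
  | var _ => rfl
  | app _ f args => congrArg f (funext fun k => eval_subst s σ (args k))

theorem usesFuns_subst {B : Set BFun} {s : V → PForm W} (hs : ∀ v, (s v).usesFuns B) :
    ∀ {p : PForm V}, p.usesFuns B → (p.subst s).usesFuns B
  | var v, _ => hs v
  | app _ _ _, hp => ⟨hp.1, fun k => usesFuns_subst hs (hp.2 k)⟩

theorem occ_subst_eq_zero [DecidableEq W] {s : V → PForm W} {x : W}
    (hs : ∀ v, (s v).occ x = 0) : ∀ p : PForm V, (p.subst s).occ x = 0
  | var v => hs v
  | app _ _ args => Finset.sum_eq_zero fun k _ => occ_subst_eq_zero hs (args k)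

theorem eval_app (σ : V → Bool) (n : ℕ) (f : (Fin n → Bool) → Bool)
    (args : Fin n → PForm V) :
    (app n f args).eval σ = f fun j => (args j).eval σ :=
  rfl

theorem eval_comp_update (σ : V → Bool) {n : ℕ} (args : Fin n → PForm V) (k : Fin n)
    (q : PForm V) :
    (fun j => (update args k q j).eval σ) = update (fun j => (args j).eval σ) k (q.eval σ) :=
  funext (apply_update (fun _ => eval σ) args k q)

theorem occ_app_eq_of_ne [DecidableEq V] {x : V} {n : ℕ} {f : (Fin n → Bool) → Bool}
    {args : Fin n → PForm V} (k : Fin n) (h : ∀ j ≠ k, (args j).occ x = 0) :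
    (app n f args).occ x = (args k).occ x :=
  Finset.sum_eq_single k (fun j _ => h j) (by simp)

theorem usesFuns_update {B : Set BFun} {n : ℕ} {args : Fin n → PForm V} {k : Fin n}
    {q : PForm V} (hargs : ∀ j, (args j).usesFuns B) (hq : q.usesFuns B) (j : Fin n) :
    (update args k q j).usesFuns B := by
  rcases eq_or_ne j k with rfl | hj
  · rwa [update_self]
  · rw [update_of_ne hj]; exact hargs j

theorem eval_monotone {B : Set BFun} (hB : B ⊆ monotoneFuns) :
    ∀ {p : PForm V}, p.usesFuns B → Monotone fun σ => p.eval σ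
  | var v, _ => fun _ _ h => h v
  | app _ _ _, hp => fun _ _ h =>
      hB hp.1 _ _ fun k => eval_monotone hB (hp.2 k) h

def dual : PForm V → PForm V
  | var v => var v
  | app n f args => app n (fun b => !f fun k => !b k) fun k => (args k).dual

theorem eval_dual (σ : V → Bool) :
    ∀ p : PForm V, p.dual.eval σ = !p.eval fun v => !σ v
  | var _ => by simp [dual, eval]
  | app _ f args => by simp only [dual, eval, eval_dual σ (args _), Bool.not_not]

theorem occ_dual [DecidableEq V] (x : V) : ∀ p : PForm V, p.dual.occ x = p.occ x
  | var _ => rfl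
  | app _ _ args => Finset.sum_congr rfl fun k _ => occ_dual x (args k)

end PForm

def BFun.dual (f : BFun) : BFun := ⟨f.1, fun b => !f.2 fun k => !b k⟩

@[simp]
theorem BFun.dual_dual (f : BFun) : f.dual.dual = f := by
  simp [BFun.dual]

theorem PForm.usesFuns_dual {V : Type} {B B' : Set BFun} (hBB' : ∀ f ∈ B, f.dual ∈ B') :
    ∀ {p : PForm V}, p.usesFuns B → p.dual.usesFuns B'
  | var _, _ => trivial
  | app n f _, hp => ⟨hBB' ⟨n, f⟩ hp.1, fun k => usesFuns_dual hBB' (hp.2 k)⟩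

theorem BFun.dual_mem_monotoneFuns {f : BFun} (hf : f ∈ monotoneFuns) :
    f.dual ∈ monotoneFuns :=
  fun _ _ hab => compl_le_compl (hf _ _ fun k => compl_le_compl (hab k))

def formulaDefinable (B : Set BFun) : Set BFun :=
  {f | ∃ p : PForm (Fin f.1), p.usesFuns B ∧ ∀ σ, p.eval σ = f.2 σ}

theorem isClone_formulaDefinable (B : Set BFun) : IsClone (formulaDefinable B) := by
  refine ⟨fun n k => ⟨.var k, trivial, fun _ => rfl⟩, ?_⟩
  rintro f ⟨p, hpB, hp⟩ m g hg
  choose q hqB hq using hg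
  refine ⟨p.subst q, PForm.usesFuns_subst hqB hpB, fun σ => ?_⟩
  rw [PForm.eval_subst, hp]
  exact congrArg f.2 (funext fun k => hq k σ)

theorem subset_cloneGen (B : Set BFun) : B ⊆ cloneGen B :=
  fun _ hf => Set.mem_sInter.2 fun _ hC => hC.2 hf

theorem cloneGen_subset_formulaDefinable (B : Set BFun) : cloneGen B ⊆ formulaDefinable B :=
  Set.sInter_subset_of_mem
    ⟨isClone_formulaDefinable B,
      fun f hf => ⟨.app f.1 f.2 .var, ⟨hf, fun _ => trivial⟩, fun _ => rfl⟩⟩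

theorem exists_flip_between {ι : Type*} [Fintype ι] [DecidableEq ι] {f : (ι → Bool) → Bool}
    {u w : ι → Bool} (huw : u ≤ w) (hu : f u = false) (hw : f w = true) :
    ∃ m k, u ≤ m ∧ m ≤ w ∧ m k = false ∧ w k = true ∧
      f m = false ∧ f (update m k true) = true := by
  obtain ⟨m, ⟨hum, hmw, hm⟩, hmax⟩ :=
    (Set.toFinite {m | u ≤ m ∧ m ≤ w ∧ f m = false}).exists_maximal ⟨u, le_rfl, huw, hu⟩
  obtain ⟨k, hk⟩ : ∃ k, ¬ w k ≤ m k := by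
    by_contra! h
    simp [le_antisymm hmw h, hw] at hm
  obtain ⟨hmk, hwk⟩ : m k = false ∧ w k = true := by
    revert hk; cases m k <;> cases w k <;> decide
  have hm_le : m ≤ update m k true := fun j => by
    rcases eq_or_ne j k with rfl | hj <;> simp [*]
  refine ⟨m, k, hum, hmw, hmk, hwk, hm, Bool.not_eq_false _ |>.mp fun hfalse => ?_⟩
  have := hmax ⟨hum.trans hm_le, fun j => ?_, hfalse⟩ hm_le k
  · simp [hmk, Bool.le_iff_imp] at this
  · rcases eq_or_ne j k with rfl | hj <;> simp [*, hmw j]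

theorem Monotone.exists_double_flip {ι : Type*} [Fintype ι] [DecidableEq ι]
    {f : (ι → Bool) → Bool} (hf : Monotone f) {u a b : ι → Bool} (hua : u ≤ a)
    (hu : f u = false) (ha : f a = true) (hb : f b = true) :
    ∃ m k k', m k = false ∧ m k' = false ∧ f m = false ∧ f (update m k true) = true ∧
      f (update m k' true) = true ∧ u k = false ∧ a k = true ∧ b k' = true := by
  obtain ⟨m, k, hum, -, hmk, hak, hfm, hfmk⟩ := exists_flip_between hua hu ha
  have hfmb : f (m ⊔ b) = true := Bool.eq_true_of_true_le (hb ▸ hf le_sup_right)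
  obtain ⟨m', k', hmm', -, hm'k', hbk', hfm', hfm'k'⟩ :=
    exists_flip_between le_sup_left hfm hfmb
  have hfm'k : f (update m' k true) = true := by
    have := hf (show update m k true ≤ update m' k true from
      update_le_update_iff.2 ⟨le_rfl, fun j _ => hmm' j⟩)
    rw [hfmk] at this
    exact Bool.eq_true_of_true_le this
  refine ⟨m', k, k', ?_, hm'k', hfm', hfm'k, hfm'k', ?_, hak, ?_⟩
  · by_contra hm'k
    rw [Bool.not_eq_false] at hm'k
    rw [update_eq_self_iff.2 hm'k.symm, hfm'] at hfm'k
    exact Bool.false_ne_true hfm'k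
  · exact Bool.eq_false_of_le_false (hmk ▸ hum k)
  · have hmk' : m k' = false := Bool.eq_false_of_le_false (hm'k' ▸ hmm' k')
    simpa [hmk'] using hbk'

open PForm in
theorem exists_readOnce_of_corners {B : Set BFun} (hB : B ⊆ monotoneFuns)
    (cst : Bool → PForm (Fin 2)) (hcB : ∀ b, (cst b).usesFuns B)
    (hcocc : ∀ b x, (cst b).occ x = 0) (hceval : ∀ b σ, (cst b).eval σ = b) :
    ∀ p : PForm (Fin 2), p.usesFuns B → p.eval ![false, false] = false →
      p.eval ![true, false] = true → p.eval ![false, true] = true →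
      ∃ h : PForm (Fin 2), h.usesFuns B ∧ h.occ 0 = 1 ∧ h.occ 1 = 1 ∧
        h.eval ![false, false] = false ∧ h.eval ![true, false] = true ∧
        h.eval ![false, true] = true
  | var x, _, h00, h10, h01 => by fin_cases x <;> simp_all [PForm.eval]
  | app n f args, hp, h00, h10, h01 => by
    have hf : Monotone f := hB hp.1
    obtain ⟨m, k, k', hmk, hmk', hfm, hfk, hfk', huk, hak, hbk'⟩ :=
      hf.exists_double_flip
        (fun j => eval_monotone hB (hp.2 j) (by simp [Pi.le_def, Fin.forall_fin_two])) h00 h10 h01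
    have hm σ : (fun j => (cst (m j)).eval σ) = m := funext fun j => hceval _ σ
    have hcB' : ∀ j, (cst (m j)).usesFuns B := fun j => hcB _
    have hm0 : update m k false = m := (update_eq_self_iff (f := m)).2 hmk.symm
    have hm0' : update m k' false = m := (update_eq_self_iff (f := m)).2 hmk'.symm
    rcases eq_or_ne k k' with rfl | hkk'
    · obtain ⟨h, hhB, hocc0, hocc1, hh00, hh10, hh01⟩ :=
        exists_readOnce_of_corners hB cst hcB hcocc hceval (args k) (hp.2 k) huk hak hbk'
      refine ⟨app n f (update (fun j => cst (m j)) k h),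
        ⟨hp.1, usesFuns_update hcB' hhB⟩, ?_, ?_, ?_, ?_, ?_⟩
      · rw [occ_app_eq_of_ne k fun j hj => by simp [update_of_ne hj, hcocc]]; simpa using hocc0
      · rw [occ_app_eq_of_ne k fun j hj => by simp [update_of_ne hj, hcocc]]; simpa using hocc1
      · rw [eval_app, eval_comp_update, hm, hh00, hm0, hfm]
      · simp only [eval_app, eval_comp_update, hm, hh10, hfk]
      · simp only [eval_app, eval_comp_update, hm, hh01, hfk]
    · refine ⟨app n f (update (update (fun j => cst (m j)) k (var 0)) k' (var 1)),
        ⟨hp.1, usesFuns_update (usesFuns_update hcB' trivial) trivial⟩, ?_, ?_, ?_, ?_, ?_⟩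
      · rw [occ_app_eq_of_ne k fun j hj => ?_, update_of_ne hkk', update_self]
        · rfl
        · rcases eq_or_ne j k' with rfl | hjk'
          · rw [update_self]; rfl
          · simp [update_of_ne hj, update_of_ne hjk', hcocc]
      · rw [occ_app_eq_of_ne k' fun j hj => ?_, update_self]
        · rfl
        · rcases eq_or_ne j k with rfl | hjk
          · rw [update_of_ne hj, update_self]; rfl
          · simp [update_of_ne hj, update_of_ne hjk, hcocc]
      · simp [eval_comp_update, hm, PForm.eval, hm0, hm0', hfm]
      · simp [eval_comp_update, hm, PForm.eval, update_comm hkk', hm0', hfk]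
      · simp [eval_comp_update, hm, PForm.eval, hm0, hfk']

theorem eq_or_of_corners {g : (Fin 2 → Bool) → Bool} (hg : Monotone g)
    (h00 : g ![false, false] = false) (h10 : g ![true, false] = true)
    (h01 : g ![false, true] = true) (σ : Fin 2 → Bool) : g σ = (σ 0 || σ 1) := by
  obtain ⟨x, y, rfl⟩ : ∃ x y, σ = ![x, y] := ⟨σ 0, σ 1, by ext i; fin_cases i <;> rfl⟩
  cases x <;> cases y
  · exact h00
  · exact h01
  · exact h10
  · have := hg (show ![true, false] ≤ ![true, true] by simp [Pi.le_def, Fin.forall_fin_two])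
    rw [h10] at this
    exact Bool.eq_true_of_true_le this

def HasConstantFormulas (B : Set BFun) : Prop :=
  ∀ b : Bool,
    ∃ q : PForm (Fin 2), q.usesFuns B ∧ (∀ x, q.occ x = 0) ∧ ∀ σ, q.eval σ = b

theorem hasConstantFormulas_of_mem_cloneGen {B : Set BFun}
    (h : ∀ b, constFun b ∈ cloneGen B) :
    HasConstantFormulas B := fun b => by
  obtain ⟨p, hpB, hp⟩ := cloneGen_subset_formulaDefinable B (h b)
  exact ⟨p.subst Fin.elim0, PForm.usesFuns_subst (s := Fin.elim0) (fun v => v.elim0) hpB,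
    fun _ => PForm.occ_subst_eq_zero (s := Fin.elim0) (fun v => v.elim0) p,
    fun σ => (PForm.eval_subst _ σ p).trans (hp _)⟩

theorem exists_readOnce_or {B : Set BFun} (hB : B ⊆ monotoneFuns)
    (hconst : HasConstantFormulas B)
    {p : PForm (Fin 2)} (hpB : p.usesFuns B) (hp : ∀ σ, p.eval σ = (σ 0 || σ 1)) :
    ∃ h : PForm (Fin 2), h.usesFuns B ∧ (∀ σ, h.eval σ = (σ 0 || σ 1)) ∧
      h.occ 0 = 1 ∧ h.occ 1 = 1 := by
  choose cst hcB hcocc hceval using hconst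
  obtain ⟨h, hhB, hocc0, hocc1, h00, h10, h01⟩ :=
    exists_readOnce_of_corners hB cst hcB hcocc hceval p hpB (hp _) (hp _) (hp _)
  exact ⟨h, hhB, eq_or_of_corners (PForm.eval_monotone hB hhB) h00 h10 h01, hocc0, hocc1⟩

theorem exists_readOnce_and {B : Set BFun} (hB : B ⊆ monotoneFuns)
    (hconst : HasConstantFormulas B)
    {p : PForm (Fin 2)} (hpB : p.usesFuns B) (hp : ∀ σ, p.eval σ = (σ 0 && σ 1)) :
    ∃ h : PForm (Fin 2), h.usesFuns B ∧ (∀ σ, h.eval σ = (σ 0 && σ 1)) ∧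
      h.occ 0 = 1 ∧ h.occ 1 = 1 := by
  have hdual : ∀ f ∈ B, f.dual ∈ BFun.dual ⁻¹' B := fun f hf => by simpa using hf
  have hB' : BFun.dual ⁻¹' B ⊆ monotoneFuns := fun f hf => by
    simpa using BFun.dual_mem_monotoneFuns (hB hf)
  have hconst' : HasConstantFormulas (BFun.dual ⁻¹' B) := fun b => by
    obtain ⟨q, hqB, hqocc, hq⟩ := hconst (!b)
    exact ⟨q.dual, q.usesFuns_dual hdual hqB, fun x => (q.occ_dual x).trans (hqocc x),
      fun σ => by simp [PForm.eval_dual, hq]⟩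
  obtain ⟨h, hhB, hh, hocc0, hocc1⟩ := exists_readOnce_or hB' hconst'
    (p.usesFuns_dual hdual hpB) fun σ => by simp [PForm.eval_dual, hp]
  refine ⟨h.dual, h.usesFuns_dual (fun _ hf => hf) hhB, fun σ => ?_,
    (h.occ_dual 0).trans hocc0, (h.occ_dual 1).trans hocc1⟩
  simp [PForm.eval_dual, hh]

theorem stmt19_general (B : Set BFun) :
    (cloneGen {orFun, constFun false, constFun true} ⊆ cloneGen B →
      cloneGen B ⊆ monotoneFuns →
      ∃ f : PForm (Fin 2), PForm.usesFuns B f ∧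
        (∀ σ : Fin 2 → Bool, PForm.eval σ f = (σ 0 || σ 1)) ∧
        PForm.occ (0 : Fin 2) f = 1 ∧ PForm.occ (1 : Fin 2) f = 1) ∧
    (cloneGen {andFun, constFun false, constFun true} ⊆ cloneGen B →
      cloneGen B ⊆ monotoneFuns →
      ∃ f : PForm (Fin 2), PForm.usesFuns B f ∧
        (∀ σ : Fin 2 → Bool, PForm.eval σ f = (σ 0 && σ 1)) ∧
        PForm.occ (0 : Fin 2) f = 1 ∧ PForm.occ (1 : Fin 2) f = 1) := by
  have hconst {g : BFun} (hg : cloneGen {g, constFun false, constFun true} ⊆ cloneGen B) :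
      HasConstantFormulas B :=
    hasConstantFormulas_of_mem_cloneGen fun b => hg (subset_cloneGen _ (by cases b <;> simp))
  refine ⟨fun hV hM => ?_, fun hE hM => ?_⟩
  · obtain ⟨p, hpB, hp⟩ :=
      cloneGen_subset_formulaDefinable B (hV (subset_cloneGen _ (Set.mem_insert orFun _)))
    exact exists_readOnce_or ((subset_cloneGen B).trans hM) (hconst hV) hpB hp
  · obtain ⟨p, hpB, hp⟩ :=
      cloneGen_subset_formulaDefinable B (hE (subset_cloneGen _ (Set.mem_insert andFun _)))
    exact exists_readOnce_and ((subset_cloneGen B).trans hM) (hconst hE) hpB hp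

/-- Let `B` be a finite set of Boolean functions. If
`V = [{∨,0,1}] ⊆ [B] ⊆ M` (resp. `E = [{∧,0,1}] ⊆ [B] ⊆ M`), where M is the clone of
monotone functions, then there is a `B`-formula `f(x,y)` (variables `V = Fin 2`)
representing `x ∨ y` (resp. `x ∧ y`) in which each of `x`, `y` occurs exactly once. -/
theorem stmt19 (B : Set BFun) (hfin : B.Finite) :
    (cloneGen {orFun, constFun false, constFun true} ⊆ cloneGen B →
      cloneGen B ⊆ monotoneFuns →
      ∃ f : PForm (Fin 2), PForm.usesFuns B f ∧
        (∀ σ : Fin 2 → Bool, PForm.eval σ f = (σ 0 || σ 1)) ∧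
        PForm.occ (0 : Fin 2) f = 1 ∧ PForm.occ (1 : Fin 2) f = 1) ∧
    (cloneGen {andFun, constFun false, constFun true} ⊆ cloneGen B →
      cloneGen B ⊆ monotoneFuns →
      ∃ f : PForm (Fin 2), PForm.usesFuns B f ∧
        (∀ σ : Fin 2 → Bool, PForm.eval σ f = (σ 0 && σ 1)) ∧
        PForm.occ (0 : Fin 2) f = 1 ∧ PForm.occ (1 : Fin 2) f = 1) :=
  stmt19_general B
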